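/- Brönnimann–Goodrich termination: Let (U,S) be a finite set system admitting a hitting set H of size c. Run the doubling algorithm with ε = 1/(2c): weights start at 1; in each round an ε-net (w.r.t. current weights) is found, and if some set T ∈ S is unhit, the weights of all elements of T are doubled (T has weight < ε·W). Then the number of doubling rounds is at most 4·c·log₂(|U|/c). -/

import Mathlib

/-!
Each round doubles a set of weight less than `w(U)/(2c)`, so the total weight grows by a factor
at most `1 + 1/(2c) ≤ 2^(3/(4c))` per round and is at most `|U|·2^(3k/(4c))` after `k` rounds.
Every doubled set meets the hitting set `H`, so the doubling counts `z_h` of the elements of `H`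
add up to at least `k`, and by convexity of `x ↦ 2^x` the weight of `H` is at least
`c·2^(k/c)`. Comparing the two bounds gives `2^(k/(4c)) ≤ |U|/c`.
-/

open Finset

section Doubling

variable {α : Type*} [DecidableEq α]

/-- The number `z_u` of rounds among the first `j` that double the weight of `u`. -/
def doublingCount (T : ℕ → Finset α) (j : ℕ) (u : α) : ℕ := #{i ∈ range j | u ∈ T i}

lemma doublingCount_succ (T : ℕ → Finset α) (j : ℕ) (u : α) :
    doublingCount T (j + 1) u = doublingCount T j u + if u ∈ T j then 1 else 0 := by
  simp only [doublingCount, card_filter, sum_range_succ]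

lemma weight_eq_two_pow_doublingCount {U : Finset α} {k : ℕ} {w : ℕ → α → ℝ}
    {T : ℕ → Finset α} (hw0 : ∀ u ∈ U, w 0 u = 1)
    (hdouble : ∀ j < k, ∀ u ∈ U, w (j + 1) u = if u ∈ T j then 2 * w j u else w j u)
    {j : ℕ} (hj : j ≤ k) {u : α} (hu : u ∈ U) : w j u = 2 ^ doublingCount T j u := by
  induction j with
  | zero => simp [doublingCount, hw0 u hu]
  | succ j ih =>
    rw [hdouble j hj u hu, ih (by omega), doublingCount_succ]
    split_ifs <;> ring

lemma le_sum_doublingCount {H : Finset α} {k : ℕ} {T : ℕ → Finset α}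
    (hhit : ∀ j < k, (H ∩ T j).Nonempty) : k ≤ ∑ h ∈ H, doublingCount T k h :=
  calc k = ∑ _j ∈ range k, 1 := by simp
    _ ≤ ∑ j ∈ range k, #(H ∩ T j) :=
      sum_le_sum fun j hj => card_pos.2 (hhit j (mem_range.1 hj))
    _ = ∑ h ∈ H, doublingCount T k h := by
      simp only [doublingCount, ← filter_mem_eq_inter, card_filter]
      exact sum_comm

lemma sum_ite_mem_two_mul {R : Type*} [NonAssocSemiring R] {U T : Finset α} (hTU : T ⊆ U)
    (f : α → R) :
    ∑ u ∈ U, (if u ∈ T then 2 * f u else f u) = ∑ u ∈ U, f u + ∑ u ∈ T, f u := by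
  have hsplit : ∀ u, (if u ∈ T then 2 * f u else f u) = f u + if u ∈ T then f u else 0 := by
    intro u
    split_ifs <;> simp [two_mul]
  simp only [hsplit, sum_add_distrib, sum_ite_mem, inter_eq_right.2 hTU]

lemma sum_le_one_add_mul_sum_of_double {U T : Finset α} (hTU : T ⊆ U) {w w' : α → ℝ}
    {ε : ℝ} (hdouble : ∀ u ∈ U, w' u = if u ∈ T then 2 * w u else w u)
    (hlight : ∑ u ∈ T, w u ≤ ε * ∑ u ∈ U, w u) :
    ∑ u ∈ U, w' u ≤ (1 + ε) * ∑ u ∈ U, w u := by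
  rw [sum_congr rfl hdouble, sum_ite_mem_two_mul hTU]
  linarith

end Doubling

lemma card_mul_rpow_average_le_sum_rpow {ι : Type*} {s : Finset ι} (hs : s.Nonempty) {b : ℝ}
    (hb : 0 < b) (z : ι → ℝ) :
    #s * b ^ ((∑ i ∈ s, z i) / #s) ≤ ∑ i ∈ s, b ^ z i := by
  have hcard : (0 : ℝ) < #s := by exact_mod_cast hs.card_pos
  have := (convexOn_rpow_left hb).map_centerMass_le (t := s) (w := fun _ => (1 : ℝ))
    (p := z) (fun _ _ => zero_le_one) (by simpa using hcard) (fun _ _ => Set.mem_univ _)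
  simp only [centerMass, sum_const, nsmul_eq_mul, mul_one, one_mul, Function.comp_apply,
    smul_eq_mul] at this
  rwa [inv_mul_eq_div, inv_mul_eq_div, le_div_iff₀ hcard, mul_comm] at this

lemma one_add_le_two_rpow {x : ℝ} (hx : 0 ≤ x) : 1 + x ≤ 2 ^ (3 / 2 * x) := by
  rw [Real.rpow_def_of_pos two_pos]
  refine (add_comm 1 x ▸ Real.add_one_le_exp x).trans (Real.exp_le_exp.2 ?_)
  nlinarith [Real.log_two_gt_d9]

lemma le_four_mul_logb_of_mul_two_rpow_le {k : ℕ} {c n : ℝ} (hc : 0 < c) (hn : 0 ≤ n)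
    (h : c * 2 ^ ((k : ℝ) / c) ≤ n * (1 + (2 * c)⁻¹) ^ k) :
    (k : ℝ) ≤ 4 * c * Real.logb 2 (n / c) := by
  have hgrowth : (1 + (2 * c)⁻¹) ^ k ≤ (2 : ℝ) ^ (3 * (k : ℝ) / (4 * c)) := by
    calc (1 + (2 * c)⁻¹) ^ k ≤ ((2 : ℝ) ^ (3 / 2 * (2 * c)⁻¹)) ^ k := by
          gcongr; exact one_add_le_two_rpow (by positivity)
      _ = (2 : ℝ) ^ (3 * (k : ℝ) / (4 * c)) := by
          rw [← Real.rpow_mul_natCast zero_le_two]; congr 1; field_simp; ring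
  have hsplit :
      (2 : ℝ) ^ ((k : ℝ) / c) = 2 ^ ((k : ℝ) / (4 * c)) * 2 ^ (3 * (k : ℝ) / (4 * c)) := by
    rw [← Real.rpow_add two_pos]; congr 1; field_simp; ring
  have hbound : 2 ^ ((k : ℝ) / (4 * c)) ≤ n / c := by
    rw [le_div_iff₀ hc, mul_comm]
    refine le_of_mul_le_mul_right ?_ (by positivity : (0 : ℝ) < 2 ^ (3 * (k : ℝ) / (4 * c)))
    calc _ = c * 2 ^ ((k : ℝ) / c) := by rw [hsplit]; ring
      _ ≤ n * (1 + (2 * c)⁻¹) ^ k := h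
      _ ≤ n * 2 ^ (3 * (k : ℝ) / (4 * c)) := by gcongr
  have hnc : 0 < n / c := (Real.rpow_pos_of_pos two_pos _).trans_le hbound
  have hlog := (Real.le_logb_iff_rpow_le one_lt_two hnc).2 hbound
  rw [div_le_iff₀ (by positivity)] at hlog
  linarith

theorem stmt12_general {α : Type*} [DecidableEq α] (U : Finset α) (S : Finset (Finset α))
    (hS : ∀ T ∈ S, T ⊆ U)
    (H : Finset α) (hHU : H ⊆ U) (c : ℕ) (hc : H.card = c) (hc1 : 1 ≤ c)
    (hHhit : ∀ T ∈ S, (H ∩ T).Nonempty)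
    (k : ℕ) (w : ℕ → α → ℝ) (T : ℕ → Finset α)
    (hw0 : ∀ u ∈ U, w 0 u = 1)
    (hT : ∀ j < k, T j ∈ S)
    (hTlight : ∀ j < k, ∑ u ∈ T j, w j u < (∑ u ∈ U, w j u) / (2 * c))
    (hdouble : ∀ j < k, ∀ u ∈ U, w (j + 1) u = if u ∈ T j then 2 * w j u else w j u) :
    (k : ℝ) ≤ 4 * c * Real.logb 2 ((U.card : ℝ) / c) := by
  have hcpos : (0 : ℝ) < c := by exact_mod_cast hc1
  have hwk : ∀ u ∈ U, w k u = 2 ^ doublingCount T k u :=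
    fun u hu => weight_eq_two_pow_doublingCount hw0 hdouble le_rfl hu
  have hupper : ∑ u ∈ U, w k u ≤ (1 + (2 * (c : ℝ))⁻¹) ^ k * U.card := by
    refine (le_geom (u := fun j => ∑ u ∈ U, w j u) (c := 1 + (2 * (c : ℝ))⁻¹)
      (by positivity) k fun j hj =>
      sum_le_one_add_mul_sum_of_double (hS _ (hT j hj)) (hdouble j hj) ?_).trans_eq ?_
    · simpa only [div_eq_inv_mul] using (hTlight j hj).le
    · simp [sum_congr rfl hw0]
  have hlower : (c : ℝ) * 2 ^ ((k : ℝ) / c) ≤ ∑ h ∈ H, w k h := by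
    have hcount : (k : ℝ) ≤ ∑ h ∈ H, (doublingCount T k h : ℝ) := by
      exact_mod_cast le_sum_doublingCount fun j hj => hHhit _ (hT j hj)
    calc (c : ℝ) * 2 ^ ((k : ℝ) / c)
        ≤ c * 2 ^ ((∑ h ∈ H, (doublingCount T k h : ℝ)) / c) := by gcongr; norm_num
      _ ≤ ∑ h ∈ H, (2 : ℝ) ^ (doublingCount T k h : ℝ) := by
        subst hc
        exact card_mul_rpow_average_le_sum_rpow (card_pos.1 hc1) two_pos _
      _ = ∑ h ∈ H, w k h := sum_congr rfl fun h hh => by rw [hwk h (hHU hh), Real.rpow_natCast]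
  refine le_four_mul_logb_of_mul_two_rpow_le hcpos (Nat.cast_nonneg _) ?_
  calc (c : ℝ) * 2 ^ ((k : ℝ) / c) ≤ ∑ u ∈ U, w k u :=
        hlower.trans <| sum_le_sum_of_subset_of_nonneg hHU fun u hu _ => by
          rw [hwk u hu]; positivity
    _ ≤ U.card * (1 + (2 * (c : ℝ))⁻¹) ^ k := hupper.trans_eq (mul_comm _ _)

/-- Brönnimann–Goodrich termination: if `(U,S)` admits a hitting set `H` of size `c`, and
the doubling algorithm (weights start at 1; each round, a set `T ∈ S` of current weight
less than `w(U)/(2c)` gets all its elements' weights doubled) runs for `k` rounds, then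
`k ≤ 4·c·log₂(|U|/c)`. -/
theorem stmt12 {α : Type*} [DecidableEq α] (U : Finset α) (S : Finset (Finset α))
    (hS : ∀ T ∈ S, T ⊆ U)
    (H : Finset α) (hHU : H ⊆ U) (c : ℕ) (hc : H.card = c) (hc1 : 1 ≤ c)
    (hUc : c ≤ U.card) (hHhit : ∀ T ∈ S, (H ∩ T).Nonempty)
    (k : ℕ) (w : ℕ → α → ℝ) (T : ℕ → Finset α)
    (hw0 : ∀ u ∈ U, w 0 u = 1)
    (hT : ∀ j < k, T j ∈ S)
    (hTlight : ∀ j < k, ∑ u ∈ T j, w j u < (∑ u ∈ U, w j u) / (2 * c))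
    (hdouble : ∀ j < k, ∀ u ∈ U, w (j + 1) u = if u ∈ T j then 2 * w j u else w j u) :
    (k : ℝ) ≤ 4 * c * Real.logb 2 ((U.card : ℝ) / c) :=
  stmt12_general U S hS H hHU c hc hc1 hHhit k w T hw0 hT hTlight hdouble
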